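/- arXiv:2410.09419 — 7 statements merged into one kernel-verified Lean document; each statement's English description precedes it below -/
import Mathlib

section
/- For every exponent q in (1,2] and all vectors v, w in ℝ^k, one has |v+w|^q ≤ (3-q)|v|^q + q|w|^{q-2}⟨v,w⟩ + |w|^q. -/
/-!
Write `a = ‖v‖`, `b = ‖w‖`, `t = ⟪v, w⟫` and scale to `b = 1`. Then `‖v + w‖ ^ q = X ^ (q / 2)`
with `X = a² + 2t + 1`, a concave function of `t ≥ -a`, while the right-hand side is affine in
`t`; so it suffices to bound the tangent line of `X ↦ X ^ (q / 2)` at the point where the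
difference is smallest.
That point is `X = 1` when `a ≤ 2`, which reduces the claim to `(q/2) a² ≤ (3 - q) a ^ q`,
and the Cauchy–Schwarz endpoint `t = -a`, i.e. `X = (a - 1)²`, when `a > 2`, which reduces it to
the one-variable inequality `(a - 1) ^ q + q a ≤ (3 - q) a ^ q + 1`. Both rest on the Bernoulli
bound `2 ^ (2 - q) ≤ 3 - q`.
-/

open Real

lemma sq_rpow_half {c : ℝ} (hc : 0 ≤ c) (r : ℝ) : (c ^ 2) ^ (r / 2) = c ^ r := by
  rw [← rpow_natCast, ← rpow_mul hc, Nat.cast_ofNat, mul_div_cancel₀ r two_ne_zero]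

lemma rpow_le_tangent {p x y : ℝ} (hp0 : 0 ≤ p) (hp1 : p ≤ 1) (hx : 0 ≤ x) (hy : 0 < y) :
    x ^ p ≤ y ^ p + p * y ^ (p - 1) * (x - y) := by
  have hbern := rpow_one_add_le_one_add_mul_self (s := x / y - 1)
    (by linarith [div_nonneg hx hy.le]) hp0 hp1
  rw [add_sub_cancel, div_rpow hx hy.le, div_le_iff₀ (rpow_pos_of_pos hy p)] at hbern
  rw [rpow_sub_one hy.ne']
  calc x ^ p ≤ (1 + p * (x / y - 1)) * y ^ p := hbern
    _ = y ^ p + p * (y ^ p / y) * (x - y) := by field_simp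

lemma two_rpow_le_one_add {r : ℝ} (hr0 : 0 ≤ r) (hr1 : r ≤ 1) : (2 : ℝ) ^ r ≤ 1 + r := by
  simpa [one_add_one_eq_two] using rpow_one_add_le_one_add_mul_self (s := 1) (by norm_num) hr0 hr1

lemma rpow_add_rpow_le_two_rpow_mul {r x y : ℝ} (hr0 : 0 ≤ r) (hr1 : r ≤ 1) (hx : 0 ≤ x)
    (hy : 0 ≤ y) : x ^ r + y ^ r ≤ 2 ^ (1 - r) * (x + y) ^ r := by
  have h := (concaveOn_rpow hr0 hr1).2 (Set.mem_Ici.2 hx) (Set.mem_Ici.2 hy)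
    (by norm_num : (0 : ℝ) ≤ 1 / 2) (by norm_num : (0 : ℝ) ≤ 1 / 2) (by norm_num)
  simp only [smul_eq_mul] at h
  rw [show 1 / 2 * x + 1 / 2 * y = (x + y) / 2 by ring, div_rpow (by linarith) zero_le_two] at h
  rw [rpow_sub zero_lt_two, rpow_one]
  have h2r : (0 : ℝ) < 2 ^ r := rpow_pos_of_pos zero_lt_two r
  calc x ^ r + y ^ r = 2 * (1 / 2 * x ^ r + 1 / 2 * y ^ r) := by ring
    _ ≤ 2 * ((x + y) ^ r / 2 ^ r) := by gcongr
    _ = 2 / 2 ^ r * (x + y) ^ r := by ring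

lemma sub_one_rpow_add_mul_le {q u : ℝ} (hq1 : 1 ≤ q) (hq2 : q ≤ 2) (hu : 1 ≤ u) :
    (u - 1) ^ q + q * u ≤ (3 - q) * u ^ q + 1 := by
  set F : ℝ → ℝ := fun x => (3 - q) * x ^ q + 1 - (x - 1) ^ q - q * x with hF
  have hF1 : 0 ≤ F 1 := by
    simp only [hF, one_rpow, sub_self, zero_rpow (by linarith : q ≠ 0)]
    linarith
  have hcont : ContinuousOn F (Set.Ici 1) := by
    have hrpow := continuous_rpow_const (by linarith : (0 : ℝ) ≤ q)
    exact (((hrpow.const_mul _).add continuous_const).sub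
      (hrpow.comp (continuous_id.sub continuous_const))).sub (continuous_const.mul continuous_id)
      |>.continuousOn
  have hderiv : ∀ x ∈ interior (Set.Ici (1 : ℝ)), HasDerivWithinAt F
      (q * ((3 - q) * x ^ (q - 1) - (x - 1) ^ (q - 1) - 1)) (interior (Set.Ici 1)) x := by
    intro x hx
    rw [interior_Ici, Set.mem_Ioi] at hx
    have hpow := hasDerivAt_rpow_const (x := x) (p := q) (Or.inl (by linarith))
    have hshift := ((hasDerivAt_id x).sub_const 1).rpow_const (p := q)
      (Or.inl (by simp only [id]; linarith))
    have h := (((hpow.const_mul (3 - q)).add_const 1).sub hshift).sub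
      ((hasDerivAt_id x).const_mul q)
    exact (h.congr_deriv (by simp only [id]; ring)).hasDerivWithinAt
  have hderiv_nonneg : ∀ x ∈ interior (Set.Ici (1 : ℝ)),
      0 ≤ q * ((3 - q) * x ^ (q - 1) - (x - 1) ^ (q - 1) - 1) := by
    intro x hx
    rw [interior_Ici, Set.mem_Ioi] at hx
    have hconc := rpow_add_rpow_le_two_rpow_mul (r := q - 1) (by linarith) (by linarith)
      (by linarith : 0 ≤ x - 1) zero_le_one
    rw [one_rpow, sub_add_cancel, show 1 - (q - 1) = 2 - q by ring] at hconc
    have hbern := two_rpow_le_one_add (r := 2 - q) (by linarith) (by linarith)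
    have hxq : 0 ≤ x ^ (q - 1) := rpow_nonneg (by linarith) _
    have hbern_mul := mul_le_mul_of_nonneg_right hbern hxq
    exact mul_nonneg (by linarith) (by linarith)
  have hmono := monotoneOn_of_hasDerivWithinAt_nonneg (convex_Ici 1) hcont hderiv hderiv_nonneg
  have hFu := hF1.trans (hmono Set.self_mem_Ici hu hu)
  simp only [hF] at hFu
  linarith

lemma sq_le_three_sub_mul_rpow {q a : ℝ} (hq1 : 1 ≤ q) (hq2 : q ≤ 2) (ha0 : 0 ≤ a) (ha2 : a ≤ 2) :
    a ^ 2 ≤ (3 - q) * a ^ q := by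
  have hsplit : a ^ 2 = a ^ q * a ^ (2 - q) := by
    rw [← rpow_add' ha0 (by norm_num), add_sub_cancel, rpow_two]
  have hbern := two_rpow_le_one_add (r := 2 - q) (by linarith) (by linarith)
  have hmono : a ^ (2 - q) ≤ 2 ^ (2 - q) := rpow_le_rpow ha0 ha2 (by linarith)
  rw [hsplit, mul_comm (3 - q)]
  exact mul_le_mul_of_nonneg_left (by linarith) (rpow_nonneg ha0 q)

lemma sq_add_two_mul_add_one_rpow_le {q a t : ℝ} (hq1 : 1 ≤ q) (hq2 : q ≤ 2) (ha : 0 ≤ a)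
    (ht : -a ≤ t) : (a ^ 2 + 2 * t + 1) ^ (q / 2) ≤ (3 - q) * a ^ q + q * t + 1 := by
  set X := a ^ 2 + 2 * t + 1
  have hX : 0 ≤ X := by nlinarith [sq_nonneg (a - 1)]
  have hp0 : 0 ≤ q / 2 := by linarith
  have hp1 : q / 2 ≤ 1 := by linarith
  rcases le_or_gt a 2 with ha2 | ha2
  · have htan := rpow_le_tangent hp0 hp1 hX one_pos
    have hsq := sq_le_three_sub_mul_rpow hq1 hq2 ha ha2
    simp only [one_rpow, mul_one] at htan
    nlinarith [sq_nonneg a]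
  · have htan := rpow_le_tangent hp0 hp1 hX (pow_pos (by linarith : 0 < a - 1) 2)
    rw [sq_rpow_half (by linarith)] at htan
    have hslope : ((a - 1) ^ 2) ^ (q / 2 - 1) ≤ 1 :=
      rpow_le_one_of_one_le_of_nonpos (by nlinarith) (by linarith)
    have hgap : X - (a - 1) ^ 2 = 2 * (t + a) := by ring
    have hgap_nonneg : 0 ≤ q / 2 * (X - (a - 1) ^ 2) := by rw [hgap]; nlinarith
    have hII := sub_one_rpow_add_mul_le hq1 hq2 (by linarith : 1 ≤ a)
    calc X ^ (q / 2)
        ≤ (a - 1) ^ q + q / 2 * ((a - 1) ^ 2) ^ (q / 2 - 1) * (X - (a - 1) ^ 2) := htan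
      _ ≤ (a - 1) ^ q + q / 2 * (X - (a - 1) ^ 2) := by
        nlinarith [mul_le_mul_of_nonneg_left hslope hgap_nonneg]
      _ = (a - 1) ^ q + q * a + q * t := by rw [hgap]; ring
      _ ≤ (3 - q) * a ^ q + q * t + 1 := by linarith

lemma sq_add_two_mul_add_sq_rpow_le {q a b t : ℝ} (hq1 : 1 ≤ q) (hq2 : q ≤ 2) (ha : 0 ≤ a)
    (hb : 0 < b) (ht : -(a * b) ≤ t) :
    (a ^ 2 + 2 * t + b ^ 2) ^ (q / 2) ≤ (3 - q) * a ^ q + q * b ^ (q - 2) * t + b ^ q := by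
  have hb2 : 0 < b ^ 2 := by positivity
  have h := sq_add_two_mul_add_one_rpow_le hq1 hq2 (div_nonneg ha hb.le) (t := t / b ^ 2)
    (by rwa [le_div_iff₀ hb2, neg_mul, div_mul_eq_mul_div, sq, ← mul_assoc,
      mul_div_cancel_right₀ _ hb.ne'])
  have hscale : a ^ 2 + 2 * t + b ^ 2 = b ^ 2 * ((a / b) ^ 2 + 2 * (t / b ^ 2) + 1) := by
    field_simp
  have hnonneg : 0 ≤ (a / b) ^ 2 + 2 * (t / b ^ 2) + 1 := by
    rw [← mul_nonneg_iff_of_pos_left hb2, ← hscale]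
    nlinarith [sq_nonneg (a - b)]
  rw [hscale, mul_rpow hb2.le hnonneg, sq_rpow_half hb.le]
  calc b ^ q * ((a / b) ^ 2 + 2 * (t / b ^ 2) + 1) ^ (q / 2)
      ≤ b ^ q * ((3 - q) * (a / b) ^ q + q * (t / b ^ 2) + 1) :=
        mul_le_mul_of_nonneg_left h (rpow_nonneg hb.le q)
    _ = (3 - q) * a ^ q + q * b ^ (q - 2) * t + b ^ q := by
        rw [div_rpow ha hb.le, rpow_sub hb, rpow_two]
        field_simp

theorem norm_add_rpow_le {E : Type*} [NormedAddCommGroup E] [InnerProductSpace ℝ E] {q : ℝ}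
    (hq1 : 1 ≤ q) (hq2 : q ≤ 2) (v w : E) :
    ‖v + w‖ ^ q ≤ (3 - q) * ‖v‖ ^ q + q * ‖w‖ ^ (q - 2) * inner ℝ v w + ‖w‖ ^ q := by
  rcases eq_or_ne w 0 with rfl | hw
  · simp only [add_zero, norm_zero, inner_zero_right, mul_zero, zero_rpow (by linarith : q ≠ 0)]
    nlinarith [rpow_nonneg (norm_nonneg v) q]
  have h := sq_add_two_mul_add_sq_rpow_le hq1 hq2 (norm_nonneg v) (norm_pos_iff.2 hw)
    (neg_le_of_abs_le (abs_real_inner_le_norm v w))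
  rwa [← norm_add_sq_real, sq_rpow_half (norm_nonneg _)] at h

theorem parallelogram_type_inequality (k : ℕ) (q : ℝ) (hq : q ∈ Set.Ioc (1 : ℝ) 2)
    (v w : EuclideanSpace ℝ (Fin k)) :
    ‖v + w‖ ^ q ≤ (3 - q) * ‖v‖ ^ q + q * ‖w‖ ^ (q - 2) * (inner ℝ v w : ℝ) + ‖w‖ ^ q :=
  norm_add_rpow_le hq.1.le hq.2 v w
end

section
/- For every q in (1,2], all r, R ≥ 0 and all t ∈ ℝ, one has (r² + R² + 2rR cos t)^{q/2} ≤ (3-q) r^q + q r R^{q-1} cos t + R^q. -/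
/-!
Write `c = cos t`. Both sides are homogeneous of degree `q` in `(r, R)`, so the larger of `r, R`
may be scaled to `1`; the left side is then `(1 + x) ^ (q / 2)` with `x = s ^ 2 + 2 s c ≥ -1`, and
Bernoulli's inequality bounds it by `1 + (q / 2) s ^ 2 + q s c`. If `r = s` is the smaller one,
`s ^ 2 ≤ s ^ q` finishes. If `R = s` is the smaller one, what remains is
`q s ^ (q - 1) ≤ (2 - q) + q s`: with `a = q - 1`, weighted AM-GM gives the sharp bound
`s ^ a ≤ s + (1 - a) a ^ (a / (1 - a))`, and `(1 + a) a ^ (a / (1 - a)) ≤ 1` follows from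
`log a ≤ a - 1` and `1 + a ≤ exp a`.
-/

open Real

theorem rpow_le_self_add_rpow_div_one_sub {a s : ℝ} (ha0 : 0 < a) (ha1 : a < 1) (hs : 0 ≤ s) :
    s ^ a ≤ s + (1 - a) * a ^ (a / (1 - a)) := by
  -- `β` maximises `s ↦ s ^ a - s`: `a * β ^ (a - 1) = 1`.
  set β := a ^ (1 / (1 - a))
  have hβ : 0 < β := rpow_pos_of_pos ha0 _
  have hβ_pow : β ^ (1 - a) = a := by
    rw [← rpow_mul ha0.le, one_div_mul_cancel (by linarith), rpow_one]
  have hβ_eq : β = a * β ^ a := by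
    conv_lhs => rw [← rpow_one β, ← sub_add_cancel 1 a, rpow_add hβ, hβ_pow]
  have hβ_a : β ^ a = a ^ (a / (1 - a)) := by
    rw [← rpow_mul ha0.le, one_div_mul_eq_div]
  have amgm := geom_mean_le_arith_mean2_weighted (w₁ := a) (w₂ := 1 - a) ha0.le (by linarith)
    hs hβ.le (by ring)
  rw [hβ_pow, hβ_eq, hβ_a] at amgm
  nlinarith

theorem one_add_mul_rpow_div_one_sub_le_one {a : ℝ} (ha0 : 0 < a) (ha1 : a < 1) :
    (1 + a) * a ^ (a / (1 - a)) ≤ 1 := by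
  have hlog : log a * (a / (1 - a)) ≤ -a := by
    have h := mul_le_mul_of_nonneg_right (log_le_sub_one_of_pos ha0)
      (div_nonneg ha0.le (sub_nonneg.2 ha1.le))
    have h1a : 1 - a ≠ 0 := (sub_pos.2 ha1).ne'
    rwa [show (a - 1) * (a / (1 - a)) = -a by field_simp; ring] at h
  calc (1 + a) * a ^ (a / (1 - a)) ≤ exp a * exp (-a) := by
        rw [rpow_def_of_pos ha0]
        gcongr
        · linarith [add_one_le_exp a]
    _ = 1 := by rw [← exp_add, add_neg_cancel, exp_zero]

theorem one_add_mul_rpow_le {a s : ℝ} (ha0 : 0 < a) (ha1 : a ≤ 1) (hs : 0 ≤ s) :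
    (1 + a) * s ^ a ≤ 1 - a + (1 + a) * s := by
  rcases ha1.eq_or_lt with rfl | ha1
  · norm_num
  have hsharp := rpow_le_self_add_rpow_div_one_sub ha0 ha1 hs
  nlinarith [one_add_mul_rpow_div_one_sub_le_one ha0 ha1]

def ParallelogramBound (q c r R : ℝ) : Prop :=
  (r ^ 2 + R ^ 2 + 2 * r * R * c) ^ (q / 2) ≤ (3 - q) * r ^ q + q * r * R ^ (q - 1) * c + R ^ q

theorem ParallelogramBound.smul {q c r R m : ℝ} (h : ParallelogramBound q c r R) (hq : 0 < q)
    (hc : -1 ≤ c) (hr : 0 ≤ r) (hR : 0 ≤ R) (hm : 0 ≤ m) :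
    ParallelogramBound q c (m * r) (m * R) := by
  have hbase : 0 ≤ r ^ 2 + R ^ 2 + 2 * r * R * c := by
    nlinarith [sq_nonneg (r - R), mul_nonneg (mul_nonneg hr hR) (neg_le_iff_add_nonneg.1 hc)]
  have hm_sq : (m ^ 2) ^ (q / 2) = m ^ q := by
    rw [← rpow_natCast, ← rpow_mul hm]
    ring_nf
  have hm_mul : m * m ^ (q - 1) = m ^ q := by
    rw [mul_comm, ← rpow_add_one' hm (by linarith), sub_add_cancel]
  unfold ParallelogramBound at *
  calc ((m * r) ^ 2 + (m * R) ^ 2 + 2 * (m * r) * (m * R) * c) ^ (q / 2)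
      = m ^ q * (r ^ 2 + R ^ 2 + 2 * r * R * c) ^ (q / 2) := by
        rw [← hm_sq, ← mul_rpow (sq_nonneg m) hbase]
        ring_nf
    _ ≤ m ^ q * ((3 - q) * r ^ q + q * r * R ^ (q - 1) * c + R ^ q) := by gcongr
    _ = _ := by
        rw [mul_rpow hm hr, mul_rpow hm hR, mul_rpow hm hR, ← hm_mul]
        ring

theorem parallelogramBound_of_left_le_one {q c s : ℝ} (hq0 : 0 ≤ q) (hq2 : q ≤ 2) (hc : -1 ≤ c)
    (hs0 : 0 ≤ s) (hs1 : s ≤ 1) : ParallelogramBound q c s 1 := by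
  have bernoulli := rpow_one_add_le_one_add_mul_self (s := s ^ 2 + 2 * s * c)
    (by nlinarith [sq_nonneg (s - 1)]) (p := q / 2) (by linarith) (by linarith)
  have hsq : s ^ 2 ≤ s ^ q := by
    rw [← rpow_natCast]
    exact rpow_le_rpow_of_exponent_ge' hs0 hs1 hq0 (by norm_num [hq2])
  unfold ParallelogramBound
  calc (s ^ 2 + 1 ^ 2 + 2 * s * 1 * c) ^ (q / 2) = (1 + (s ^ 2 + 2 * s * c)) ^ (q / 2) := by ring_nf
    _ ≤ 1 + q / 2 * (s ^ 2 + 2 * s * c) := bernoulli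
    _ ≤ (3 - q) * s ^ q + q * s * 1 ^ (q - 1) * c + 1 ^ q := by
        rw [one_rpow, one_rpow]
        nlinarith [sq_nonneg s]

theorem parallelogramBound_of_right_le_one {q c s : ℝ} (hq1 : 1 < q) (hq2 : q ≤ 2) (hc : -1 ≤ c)
    (hs0 : 0 ≤ s) (hs1 : s ≤ 1) : ParallelogramBound q c 1 s := by
  have bernoulli := rpow_one_add_le_one_add_mul_self (s := s ^ 2 + 2 * s * c)
    (by nlinarith [sq_nonneg (s - 1)]) (p := q / 2) (by linarith) (by linarith)
  have key := one_add_mul_rpow_le (a := q - 1) (by linarith) (by linarith) hs0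
  rw [add_sub_cancel, show 1 - (q - 1) = 2 - q by ring] at key
  have hsq : s ^ 2 ≤ s ^ q := by
    rw [← rpow_natCast]
    exact rpow_le_rpow_of_exponent_ge' hs0 hs1 (by linarith) (by norm_num [hq2])
  have hs_le : s ≤ s ^ (q - 1) := by
    simpa using rpow_le_rpow_of_exponent_ge' hs0 hs1 (by linarith) (by linarith : q - 1 ≤ 1)
  unfold ParallelogramBound
  calc (1 ^ 2 + s ^ 2 + 2 * 1 * s * c) ^ (q / 2) = (1 + (s ^ 2 + 2 * s * c)) ^ (q / 2) := by ring_nf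
    _ ≤ 1 + q / 2 * (s ^ 2 + 2 * s * c) := bernoulli
    _ ≤ (3 - q) * 1 ^ q + q * 1 * s ^ (q - 1) * c + s ^ q := by
        rw [one_rpow]
        nlinarith [sq_nonneg s, mul_nonneg (mul_nonneg (by linarith : (0 : ℝ) ≤ q)
    (neg_le_iff_add_nonneg.1 hc)) (sub_nonneg.2 hs_le)]

theorem scalar_parallelogram_type_inequality (q : ℝ) (hq : q ∈ Set.Ioc (1 : ℝ) 2)
    (r R : ℝ) (hr : 0 ≤ r) (hR : 0 ≤ R) (t : ℝ) :
    (r ^ 2 + R ^ 2 + 2 * r * R * Real.cos t) ^ (q / 2) ≤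
      (3 - q) * r ^ q + q * r * R ^ (q - 1) * Real.cos t + R ^ q := by
  obtain ⟨hq1, hq2⟩ := hq
  have hq0 : 0 < q := by linarith
  have hc := neg_one_le_cos t
  rcases le_total R r with hRr | hrR
  · have h := (parallelogramBound_of_right_le_one hq1 hq2 hc (div_nonneg hR hr)
      (div_le_one_of_le₀ hRr hr)).smul hq0 hc zero_le_one (div_nonneg hR hr) hr
    rwa [mul_one, mul_div_cancel_of_imp' fun h ↦ le_antisymm (h ▸ hRr) hR] at h
  · have h := (parallelogramBound_of_left_le_one hq0.le hq2 hc (div_nonneg hr hR)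
      (div_le_one_of_le₀ hrR hR)).smul hq0 hc (div_nonneg hr hR) zero_le_one hR
    rwa [mul_one, mul_div_cancel_of_imp' fun h ↦ le_antisymm (h ▸ hrR) hr] at h
end

section
/- For every q in (1,2) and every s in (0,1), the quantity 2 - q + s^q - (q/2)s² - q s (s^{q-2} - 1) is non-negative. -/
open Real

set_option maxHeartbeats 1000000 in
theorem aux_function_nonneg (q s : ℝ) (hq : q ∈ Set.Ioo (1 : ℝ) 2) (hs : s ∈ Set.Ioo (0 : ℝ) 1) :
    0 ≤ 2 - q + s ^ q - (q / 2) * s ^ 2 - q * s * (s ^ (q - 2) - 1) := by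
  obtain ⟨hq1, hq2⟩ := hq
  obtain ⟨hs0, hs1⟩ := hs
  set r := Real.sqrt s with hr
  have hr0 : 0 < r := Real.sqrt_pos.mpr hs0
  have hrs : r ^ 2 = s := Real.sq_sqrt hs0.le
  have hr1 : r < 1 := by
    nlinarith [hr0, hrs]
  set w := r ^ (q - 1) with hw
  have hw0 : 0 < w := Real.rpow_pos_of_pos hr0 _
  -- key rpow identities
  have hsq1 : s ^ (q - 1) = w ^ 2 := by
    rw [← hrs, hw, ← Real.rpow_natCast r 2, ← Real.rpow_natCast (r ^ (q-1)) 2,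
      ← Real.rpow_mul hr0.le, ← Real.rpow_mul hr0.le]
    ring_nf
  have hsq : s ^ q = w ^ 2 * r ^ 2 := by
    have : s ^ q = s ^ (q - 1) * s ^ (1 : ℝ) := by
      rw [← Real.rpow_add hs0]; ring_nf
    rw [this, Real.rpow_one, hsq1, hrs]
  have hsq2 : s ^ (q - 2) * s = w ^ 2 := by
    have : s ^ (q - 2) * s ^ (1 : ℝ) = s ^ (q - 1) := by
      rw [← Real.rpow_add hs0]; ring_nf
    rw [← hsq1, ← this, Real.rpow_one]
  -- chord (Bernoulli / weighted AM-GM) bound : w ≤ (q-1) r + (2-q)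
  have hchord : w ≤ (q - 1) * r + (2 - q) := by
    have h := Real.geom_mean_le_arith_mean2_weighted (by linarith : (0:ℝ) ≤ q - 1)
      (by linarith : (0:ℝ) ≤ 2 - q) hr0.le (by norm_num : (0:ℝ) ≤ 1) (by ring)
    simpa using h
  have hwr : r ≤ w := by
    calc r = r ^ (1 : ℝ) := (Real.rpow_one r).symm
    _ ≤ r ^ (q - 1) := by
        apply Real.rpow_le_rpow_of_exponent_ge hr0 hr1.le; linarith
  -- rewrite goal as polynomial inequality
  have hsq3 : s ^ (q - 2) = w ^ 2 / s := by
    rw [eq_div_iff hs0.ne']; exact hsq2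
  clear_value w
  clear_value r
  have hgoal : 2 - q + s ^ q - (q / 2) * s ^ 2 - q * s * (s ^ (q - 2) - 1)
      = 2 - q + w ^ 2 * r ^ 2 - (q / 2) * r ^ 4 - q * w ^ 2 + q * r ^ 2 := by
    rw [hsq, hsq3, ← hrs]
    field_simp
    ring
  rw [hgoal]
  -- SOS certificate
  have hB : w ^ 2 ≤ ((q - 1) * r + (2 - q)) ^ 2 := by nlinarith [hw0, hchord]
  have hE1 : (0:ℝ) ≤ (2 - q) * (2 * (1 - r) ^ 2 * q - (2 - 2*r + r^2 - 2*r^3 + r^4)) ^ 2 :=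
    mul_nonneg (by linarith) (sq_nonneg _)
  have hE2 : (0:ℝ) ≤ (2 - q) * ((r * (1 - r)) ^ 2 * ((2 - r) * (2 - r + r^3))) :=
    mul_nonneg (by linarith)
      (mul_nonneg (sq_nonneg _)
        (mul_nonneg (by linarith) (by nlinarith)))
  have hE3 : (0:ℝ) ≤ 4 * (1 - r) ^ 2 * (q - r^2) * (((q - 1) * r + (2 - q)) ^ 2 - w ^ 2) :=
    mul_nonneg (mul_nonneg (by positivity) (by nlinarith)) (by linarith)
  have hkey : (2 - q + w ^ 2 * r ^ 2 - (q / 2) * r ^ 4 - q * w ^ 2 + q * r ^ 2) * (4 * (1 - r) ^ 2)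
      = (2 - q) * (2 * (1 - r) ^ 2 * q - (2 - 2*r + r^2 - 2*r^3 + r^4)) ^ 2
        + (2 - q) * ((r * (1 - r)) ^ 2 * ((2 - r) * (2 - r + r^3)))
        + 4 * (1 - r) ^ 2 * (q - r^2) * (((q - 1) * r + (2 - q)) ^ 2 - w ^ 2) := by
    ring
  have hfac : (0:ℝ) < 4 * (1 - r) ^ 2 := by
    have h1r : (0:ℝ) < 1 - r := by linarith
    positivity
  have hT4 : 0 ≤ (2 - q + w ^ 2 * r ^ 2 - (q / 2) * r ^ 4 - q * w ^ 2 + q * r ^ 2)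
      * (4 * (1 - r) ^ 2) := by
    rw [hkey]; linarith
  exact nonneg_of_mul_nonneg_left hT4 hfac
end

section
/- For every real r ≥ 1, the function x ↦ Γ(rx)/Γ(x) is monotonically increasing on the interval [1/2, ∞). -/
/-!
Pass to the limit in Euler's formula
`log Γ(x) = lim (x log n + log n! - ∑_{j ≤ n} log (x + j))`. For `1/2 ≤ x ≤ y` and `r ≥ 1` put
`A_j = (r y + j)(x + j)` and `B_j = (r x + j)(y + j)`. Then `A_j - B_j = j (r - 1)(y - x)` and
`B_j ≥ (j + 1/2)²`, so `log A_j - log B_j ≤ (r - 1)(y - x) j / (j + 1/2)²`, and these bounds sum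
to at most `(r - 1)(y - x) log n`, which is exactly the difference of the `x log n` terms.
-/

open Real Filter Topology Finset
open Real.BohrMollerup (logGammaSeq tendsto_log_gamma)

lemma sum_div_add_half_sq_le_log {n : ℕ} (hn : 4 ≤ n) :
    ∑ j ∈ range (n + 1), (j : ℝ) / (j + 1 / 2) ^ 2 ≤ log n := by
  induction n, hn using Nat.le_induction with
  | base =>
    have h4 : log (4 : ℕ) = 2 * log 2 := by
      rw [show ((4 : ℕ) : ℝ) = 2 ^ 2 by norm_num, log_pow]; norm_num
    rw [h4]
    simp only [sum_range_succ, sum_range_zero]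
    norm_num
    linarith [log_two_gt_d9]
  | succ n hn ih =>
    have hn0 : (0 : ℝ) < n := by exact_mod_cast (by omega : 0 < n)
    have hterm : ((n + 1 : ℕ) : ℝ) / ((n + 1 : ℕ) + 1 / 2) ^ 2 ≤ 1 - (((n : ℝ) + 1) / n)⁻¹ := by
      rw [inv_div, one_sub_div (by positivity), div_le_div_iff₀ (by positivity) (by positivity)]
      push_cast
      nlinarith
    have hlog := one_sub_inv_le_log_of_pos (x := (n + 1) / n) (by positivity)
    rw [log_div (by positivity) hn0.ne'] at hlog
    rw [sum_range_succ]
    push_cast at hterm ⊢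
    linarith

lemma log_add_log_sub_log_add_log_le {r x y j : ℝ} (hr : 1 ≤ r) (hx : 1 / 2 ≤ x) (hxy : x ≤ y)
    (hj : 0 ≤ j) :
    log (r * y + j) + log (x + j) - (log (r * x + j) + log (y + j))
      ≤ (r - 1) * (y - x) * (j / (j + 1 / 2) ^ 2) := by
  have hr0 : 0 < r := by linarith
  have hx0 : 0 < x := by linarith
  have hy0 : 0 < y := by linarith
  have hrx : x ≤ r * x := le_mul_of_one_le_left hx0.le hr
  have hry : y ≤ r * y := le_mul_of_one_le_left hy0.le hr
  set A := (r * y + j) * (x + j)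
  set B := (r * x + j) * (y + j)
  have hB : (j + 1 / 2) ^ 2 ≤ B := by nlinarith
  have hA : 0 < A := by positivity
  have hB0 : 0 < B := by positivity
  have hAB : A - B = (r - 1) * (y - x) * j := by ring
  have hAB_nonneg : 0 ≤ A - B := by
    rw [hAB]; exact mul_nonneg (mul_nonneg (by linarith) (by linarith)) hj
  calc log (r * y + j) + log (x + j) - (log (r * x + j) + log (y + j))
      = log (A / B) := by
        rw [log_div hA.ne' hB0.ne', log_mul (by positivity) (by positivity),
          log_mul (by positivity) (by positivity)]
    _ ≤ A / B - 1 := log_le_sub_one_of_pos (by positivity)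
    _ = (A - B) / B := by rw [sub_div, div_self hB0.ne']
    _ ≤ (A - B) / (j + 1 / 2) ^ 2 := by gcongr
    _ = (r - 1) * (y - x) * (j / (j + 1 / 2) ^ 2) := by rw [hAB]; ring

lemma logGammaSeq_mul_add_le {r x y : ℝ} (hr : 1 ≤ r) (hx : 1 / 2 ≤ x) (hxy : x ≤ y)
    {n : ℕ} (hn : 4 ≤ n) :
    logGammaSeq (r * x) n + logGammaSeq y n ≤ logGammaSeq (r * y) n + logGammaSeq x n := by
  have hsum : ∑ j ∈ range (n + 1),
      (log (r * y + j) + log (x + j) - (log (r * x + j) + log (y + j)))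
        ≤ (r - 1) * (y - x) * log n :=
    calc _ ≤ ∑ j ∈ range (n + 1), (r - 1) * (y - x) * ((j : ℝ) / (j + 1 / 2) ^ 2) :=
          sum_le_sum fun j _ ↦ log_add_log_sub_log_add_log_le hr hx hxy j.cast_nonneg
      _ = (r - 1) * (y - x) * ∑ j ∈ range (n + 1), (j : ℝ) / (j + 1 / 2) ^ 2 := by
          rw [mul_sum]
      _ ≤ (r - 1) * (y - x) * log n :=
          mul_le_mul_of_nonneg_left (sum_div_add_half_sq_le_log hn)
            (mul_nonneg (by linarith) (by linarith))
  simp only [logGammaSeq, sum_sub_distrib, sum_add_distrib] at hsum ⊢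
  linarith

theorem monotoneOn_log_Gamma_mul_sub_log_Gamma {r : ℝ} (hr : 1 ≤ r) :
    MonotoneOn (fun x ↦ log (Gamma (r * x)) - log (Gamma x)) (Set.Ici (1 / 2)) := by
  intro x hx y hy hxy
  have hx0 : 0 < x := by simp only [Set.mem_Ici] at hx; linarith
  have hy0 : 0 < y := hx0.trans_le hxy
  have hr0 : 0 < r := by linarith
  rw [sub_le_sub_iff]
  refine le_of_tendsto_of_tendsto
    ((tendsto_log_gamma (mul_pos hr0 hx0)).add (tendsto_log_gamma hy0))
    ((tendsto_log_gamma (mul_pos hr0 hy0)).add (tendsto_log_gamma hx0)) ?_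
  filter_upwards [eventually_ge_atTop 4] with n hn
  exact logGammaSeq_mul_add_le hr hx hxy hn

theorem gamma_ratio_monotone (r : ℝ) (hr : 1 ≤ r) :
    MonotoneOn (fun x : ℝ => Real.Gamma (r * x) / Real.Gamma x) (Set.Ici (1 / 2 : ℝ)) := by
  refine (exp_monotone.comp_monotoneOn (monotoneOn_log_Gamma_mul_sub_log_Gamma hr)).congr ?_
  intro x hx
  have hx0 : 0 < x := by simp only [Set.mem_Ici] at hx; linarith
  have hrx0 : 0 < r * x := mul_pos (by linarith) hx0
  simp only [Function.comp_apply, exp_sub, exp_log (Gamma_pos_of_pos hrx0),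
    exp_log (Gamma_pos_of_pos hx0)]
end

section
/- For every real r ≥ 1 and every x ≥ 1/2, one has r·ψ(rx) ≥ ψ(x), where ψ = Γ'/Γ is the digamma function. -/
/-!
With `G s = log Γ(eˢ)` one has `G' s = eˢ ψ(eˢ)`, so the inequality `x ψ(x) ≤ (r x) ψ(r x)` is the
monotonicity of `G'` on `[-log 2, ∞)`, i.e. the convexity of `G` there. Convexity passes to `G`
from Gauss's approximants `s ↦ eˢ log n + log n! - ∑_{j ≤ n} log (eˢ + j)`, whose second
derivative `eˢ (log n - ∑_{j ≤ n} j / (eˢ + j)²)` is nonnegative for `eˢ ≥ 1/2` and `n ≥ 3`: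
there `j / (eˢ + j)² ≤ 4 j / (2 j + 1)² ≤ 1 / j ≤ log j - log (j - 1)`, which bounds the sum by
`log n` after a numerical check at `n = 3`.
-/

open Real

/-- The digamma function `ψ = Γ'/Γ`. -/
noncomputable def digamma (x : ℝ) : ℝ := deriv Real.Gamma x / Real.Gamma x

open Filter Topology Set BohrMollerup
open Finset (range mul_sum sum_le_sum sum_range_succ)

theorem convexOn_of_tendsto {ι E : Type*} [AddCommMonoid E] [Module ℝ E] {l : Filter ι}
    [l.NeBot] {s : Set E} {F : ι → E → ℝ} {f : E → ℝ} (hF : ∀ᶠ i in l, ConvexOn ℝ s (F i))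
    (hlim : ∀ x ∈ s, Tendsto (fun i ↦ F i x) l (𝓝 (f x))) : ConvexOn ℝ s f := by
  refine ⟨hF.exists.choose_spec.1, fun x hx y hy a b ha hb hab ↦ ?_⟩
  refine le_of_tendsto_of_tendsto (hlim _ (hF.exists.choose_spec.1 hx hy ha hb hab))
    (((hlim x hx).const_mul a).add ((hlim y hy).const_mul b)) ?_
  filter_upwards [hF] with i hi
  exact hi.2 hx hy ha hb hab

theorem inv_add_one_le_log_add_one_sub_log {x : ℝ} (hx : 0 < x) :
    (x + 1)⁻¹ ≤ log (x + 1) - log x := by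
  have h := one_sub_inv_le_log_of_pos (x := (x + 1) / x) (by positivity)
  rw [log_div (by positivity) hx.ne', inv_div] at h
  convert h using 1
  field_simp
  ring

theorem sum_range_four_mul_div_sq_le_log {n : ℕ} (hn : 3 ≤ n) :
    ∑ j ∈ range (n + 1), 4 * (j : ℝ) / (2 * j + 1) ^ 2 ≤ log n := by
  induction n, hn using Nat.le_induction with
  | base =>
    have hlog3 : log 2 + 1 / 3 ≤ log 3 := by
      linarith [inv_add_one_le_log_add_one_sub_log (x := 2) two_pos]
    have := log_two_gt_d9
    simp only [sum_range_succ, Finset.range_zero, Finset.sum_empty]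
    norm_num
    linarith
  | succ m hm ih =>
    have hm0 : (0 : ℝ) < m := by positivity
    have hterm : 4 * ((m : ℝ) + 1) / (2 * (m + 1) + 1) ^ 2 ≤ ((m : ℝ) + 1)⁻¹ := by
      rw [div_le_iff₀ (by positivity), inv_mul_eq_div, le_div_iff₀ (by positivity)]
      nlinarith
    rw [sum_range_succ]
    push_cast
    linarith [inv_add_one_le_log_add_one_sub_log hm0]

theorem sum_range_div_add_sq_le_log {t : ℝ} (ht : 1 / 2 ≤ t) {n : ℕ} (hn : 3 ≤ n) :
    ∑ j ∈ range (n + 1), (j : ℝ) / (t + j) ^ 2 ≤ log n := by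
  refine le_trans (sum_le_sum fun j _ ↦ ?_) (sum_range_four_mul_div_sq_le_log hn)
  calc (j : ℝ) / (t + j) ^ 2 ≤ (j : ℝ) / ((2 * j + 1) / 2) ^ 2 := by gcongr; linarith
    _ = 4 * (j : ℝ) / (2 * j + 1) ^ 2 := by field_simp; ring

theorem hasDerivAt_logGammaSeq_exp (n : ℕ) (s : ℝ) :
    HasDerivAt (fun s ↦ logGammaSeq (exp s) n)
      (exp s * log n - ∑ j ∈ range (n + 1), exp s / (exp s + j)) s := by
  refine (((hasDerivAt_exp s).mul_const _).add_const _).sub (HasDerivAt.fun_sum fun j _ ↦ ?_)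
  exact ((hasDerivAt_exp s).add_const _).log (by positivity)

theorem hasDerivAt_deriv_logGammaSeq_exp (n : ℕ) (s : ℝ) :
    HasDerivAt (fun s ↦ exp s * log n - ∑ j ∈ range (n + 1), exp s / (exp s + j))
      (exp s * (log n - ∑ j ∈ range (n + 1), (j : ℝ) / (exp s + j) ^ 2)) s := by
  have hsum : HasDerivAt (fun s ↦ ∑ j ∈ range (n + 1), exp s / (exp s + j))
      (∑ j ∈ range (n + 1), exp s * ((j : ℝ) / (exp s + j) ^ 2)) s := by
    refine HasDerivAt.fun_sum fun j _ ↦ ?_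
    refine ((hasDerivAt_exp s).div ((hasDerivAt_exp s).add_const (j : ℝ))
      (by positivity)).congr_deriv ?_
    ring
  refine (((hasDerivAt_exp s).mul_const _).sub hsum).congr_deriv ?_
  rw [mul_sub, mul_sum]

theorem convexOn_logGammaSeq_exp {n : ℕ} (hn : 3 ≤ n) :
    ConvexOn ℝ (Ici (-log 2)) (fun s ↦ logGammaSeq (exp s) n) := by
  refine convexOn_of_hasDerivWithinAt2_nonneg (convex_Ici _)
    (fun s _ ↦ (hasDerivAt_logGammaSeq_exp n s).continuousAt.continuousWithinAt)
    (fun s _ ↦ (hasDerivAt_logGammaSeq_exp n s).hasDerivWithinAt)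
    (fun s _ ↦ (hasDerivAt_deriv_logGammaSeq_exp n s).hasDerivWithinAt) fun s hs ↦ ?_
  have hexp : 1 / 2 ≤ exp s := by
    have := exp_le_exp.2 (interior_subset hs : -log 2 ≤ s)
    rwa [exp_neg, exp_log two_pos, ← one_div] at this
  exact mul_nonneg (exp_pos s).le (sub_nonneg.2 (sum_range_div_add_sq_le_log hexp hn))

theorem convexOn_log_Gamma_exp : ConvexOn ℝ (Ici (-log 2)) (fun s ↦ log (Gamma (exp s))) :=
  convexOn_of_tendsto ((eventually_ge_atTop 3).mono fun _ ↦ convexOn_logGammaSeq_exp)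
    fun s _ ↦ tendsto_log_gamma (exp_pos s)

theorem hasDerivAt_log_Gamma {x : ℝ} (hx : 0 < x) :
    HasDerivAt (fun x ↦ log (Gamma x)) (digamma x) x := by
  have hΓ : DifferentiableAt ℝ Gamma x :=
    differentiableAt_Gamma fun m ↦ by linarith [(Nat.cast_nonneg m : (0 : ℝ) ≤ m)]
  exact hΓ.hasDerivAt.log (Gamma_pos_of_pos hx).ne'

theorem monotoneOn_mul_digamma : MonotoneOn (fun x ↦ x * digamma x) (Ici (1 / 2)) := by
  have hderiv (s : ℝ) : HasDerivAt (fun s ↦ log (Gamma (exp s))) (exp s * digamma (exp s)) s :=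
    ((hasDerivAt_log_Gamma (exp_pos s)).comp s (hasDerivAt_exp s)).congr_deriv (mul_comm _ _)
  have hmono := convexOn_log_Gamma_exp.monotoneOn_deriv fun s _ ↦ (hderiv s).differentiableAt
  intro x hx y hy hxy
  have hx0 : 0 < x := by linarith [mem_Ici.1 hx]
  have hlog {z : ℝ} (hz : z ∈ Ici (1 / 2)) : log z ∈ Ici (-log 2) := by
    rw [mem_Ici, ← log_inv, ← one_div]
    exact log_le_log (by norm_num) hz
  have := hmono (hlog hx) (hlog hy) (log_le_log hx0 hxy)
  rwa [(hderiv _).deriv, (hderiv _).deriv, exp_log hx0, exp_log (hx0.trans_le hxy)] at this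

theorem digamma_ineq (r x : ℝ) (hr : 1 ≤ r) (hx : 1 / 2 ≤ x) :
    digamma x ≤ r * digamma (r * x) := by
  have hx0 : 0 < x := by linarith
  have hxrx : x ≤ r * x := le_mul_of_one_le_left hx0.le hr
  have := monotoneOn_mul_digamma (mem_Ici.2 hx) (mem_Ici.2 (hx.trans hxrx)) hxrx
  rw [← mul_le_mul_iff_right₀ hx0]
  linarith
end

section
/- Fix α > 0, an integer n ≥ 1 and x₀ ∈ ℝ^n, and let f(x) = (α/π)^{n/4} e^{-(α/2)|x - x₀|²}. Then ∫_{ℝ^n} f² dx = 1 and equality holds in the parametric logarithmic-Sobolev inequality: ∫_{ℝ^n} f² log f² dx = -n + (n/2) log(α/π) + (1/α) ∫_{ℝ^n} |∇f|² dx. -/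
open Real MeasureTheory Set Module

/-! `f²` is the Gaussian density with covariance `(2α)⁻¹ I` centred at `x₀`, so `log f²` is
`(n/2) log (α/π) - α ‖x - x₀‖²` and `‖∇f‖² = α² ‖x - x₀‖² f²`. Both sides of the identity thus
reduce to the second moment `∫ ‖x - x₀‖² f² = n / (2α)`, which polar coordinates turn into the
recursion `Γ(s + 1) = s Γ(s)`. -/

theorem sq_rpow_div_four_mul_exp_neg_half_mul {α : ℝ} (hα : 0 < α) (d t : ℝ) :
    ((α / π) ^ (d / 4) * exp (-(α / 2) * t)) ^ 2 = ((π / α) ^ (d / 2))⁻¹ * exp (-α * t) := by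
  rw [mul_pow, ← rpow_natCast, ← rpow_mul (by positivity), ← inv_div π α,
    inv_rpow (by positivity), ← exp_nat_mul]
  congr 2
  · congr 1
    push_cast
    ring
  · push_cast
    ring

theorem integral_rpow_mul_sq_mul_exp_neg_mul_sq {b q : ℝ} (hb : 0 < b) (hq : -1 < q) :
    ∫ x in Ioi (0 : ℝ), x ^ q * (x ^ 2 * exp (-b * x ^ 2)) =
      (q + 1) / (2 * b) * ∫ x in Ioi (0 : ℝ), x ^ q * exp (-b * x ^ 2) := by
  have hrpow : ∫ x in Ioi (0 : ℝ), x ^ q * (x ^ 2 * exp (-b * x ^ 2)) =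
      ∫ x in Ioi (0 : ℝ), x ^ (q + 2) * exp (-b * x ^ (2 : ℝ)) := by
    refine setIntegral_congr_fun measurableSet_Ioi fun x (hx : 0 < x) => ?_
    rw [rpow_add hx, rpow_two, mul_assoc]
  have hq1 : (q + 1) / 2 ≠ 0 := by intro h; linarith [div_eq_zero_iff.1 h]
  simp_rw [hrpow, ← rpow_two]
  rw [integral_rpow_mul_exp_neg_mul_rpow two_pos (by linarith) hb,
    integral_rpow_mul_exp_neg_mul_rpow two_pos hq hb,
    show (q + 2 + 1) / 2 = (q + 1) / 2 + 1 by ring, Gamma_add_one hq1,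
    show -(q + 2 + 1) / 2 = -(q + 1) / 2 + -1 by ring, rpow_add hb, rpow_neg_one]
  field_simp

section Haar

variable {E : Type*} [NormedAddCommGroup E] [NormedSpace ℝ E] [FiniteDimensional ℝ E]
  [MeasurableSpace E] [BorelSpace E] (μ : Measure E) [μ.IsAddHaarMeasure]

theorem integrable_pow_norm_mul_exp_neg_mul_sq_norm {b : ℝ} (hb : 0 < b) (k : ℕ) :
    Integrable (fun x => ‖x‖ ^ k * exp (-b * ‖x‖ ^ 2)) μ := by
  rcases subsingleton_or_nontrivial E with hE | hE
  · exact Integrable.of_finite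
  rw [integrable_fun_norm_addHaar μ (f := fun y => y ^ k * exp (-b * y ^ 2))]
  refine (integrableOn_rpow_mul_exp_neg_mul_sq hb (s := ((finrank ℝ E - 1 + k : ℕ) : ℝ))
    (neg_one_lt_zero.trans_le (Nat.cast_nonneg _))).congr_fun (fun y _ => ?_) measurableSet_Ioi
  dsimp only
  rw [rpow_natCast, pow_add, smul_eq_mul, mul_assoc]

theorem integral_sq_norm_mul_exp_neg_mul_sq_norm {b : ℝ} (hb : 0 < b) :
    ∫ x, ‖x‖ ^ 2 * exp (-b * ‖x‖ ^ 2) ∂μ =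
      finrank ℝ E / (2 * b) * ∫ x, exp (-b * ‖x‖ ^ 2) ∂μ := by
  rcases subsingleton_or_nontrivial E with hE | hE
  · simp [finrank_zero_of_subsingleton, Subsingleton.eq_zero]
  have hd : 1 ≤ finrank ℝ E := finrank_pos
  rw [integral_fun_norm_addHaar μ (fun y => y ^ 2 * exp (-b * y ^ 2)),
    integral_fun_norm_addHaar μ (fun y => exp (-b * y ^ 2))]
  simp only [smul_eq_mul, ← rpow_natCast (n := finrank ℝ E - 1)]
  rw [integral_rpow_mul_sq_mul_exp_neg_mul_sq hb (neg_one_lt_zero.trans_le (Nat.cast_nonneg _)),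
    Nat.cast_sub hd]
  ring

end Haar

section InnerProductSpace

variable {V : Type*} [NormedAddCommGroup V] [InnerProductSpace ℝ V]

theorem hasGradientAt_mul_exp_neg_mul_sq_norm_sub [CompleteSpace V] (c a : ℝ) (x₀ x : V) :
    HasGradientAt (fun y => c * exp (-a * ‖y - x₀‖ ^ 2))
      ((-2 * a * (c * exp (-a * ‖x - x₀‖ ^ 2))) • (x - x₀)) x := by
  rw [hasGradientAt_iff_hasFDerivAt]
  have hsq := ((hasFDerivAt_id x).sub_const x₀).norm_sq
  refine (((hsq.const_mul (-a)).exp).const_mul c).congr_fderiv ?_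
  ext y
  simp only [id_eq, neg_mul, map_sub, ContinuousLinearMap.comp_id, neg_smul, smul_neg, neg_apply,
    smul_apply, sub_apply, coe_innerSL_apply, nsmul_eq_mul, Nat.cast_ofNat, smul_eq_mul, map_neg,
    map_smul, InnerProductSpace.toDual_apply_apply, neg_inj]
  ring

theorem sq_norm_gradient_mul_exp_neg_mul_sq_norm_sub [CompleteSpace V] (c a : ℝ) (x₀ x : V) :
    ‖gradient (fun y => c * exp (-a * ‖y - x₀‖ ^ 2)) x‖ ^ 2 =
      (2 * a) ^ 2 * ‖x - x₀‖ ^ 2 * (c * exp (-a * ‖x - x₀‖ ^ 2)) ^ 2 := by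
  rw [(hasGradientAt_mul_exp_neg_mul_sq_norm_sub c a x₀ x).gradient, norm_smul, mul_pow,
    norm_eq_abs, sq_abs]
  ring

variable [FiniteDimensional ℝ V] [MeasurableSpace V] [BorelSpace V]

theorem integral_exp_neg_mul_sq_norm_sub {b : ℝ} (hb : 0 < b) (x₀ : V) :
    ∫ x, exp (-b * ‖x - x₀‖ ^ 2) = (π / b) ^ (finrank ℝ V / 2 : ℝ) := by
  rw [integral_sub_right_eq_self (fun x => exp (-b * ‖x‖ ^ 2)) x₀,
    GaussianFourier.integral_rexp_neg_mul_sq_norm hb]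

theorem integral_sq_norm_sub_mul_exp_neg_mul_sq_norm_sub {b : ℝ} (hb : 0 < b) (x₀ : V) :
    ∫ x, ‖x - x₀‖ ^ 2 * exp (-b * ‖x - x₀‖ ^ 2) =
      finrank ℝ V / (2 * b) * (π / b) ^ (finrank ℝ V / 2 : ℝ) := by
  rw [integral_sub_right_eq_self (fun x => ‖x‖ ^ 2 * exp (-b * ‖x‖ ^ 2)) x₀,
    integral_sq_norm_mul_exp_neg_mul_sq_norm volume hb,
    GaussianFourier.integral_rexp_neg_mul_sq_norm hb]

end InnerProductSpace

theorem gaussian_extremal_logSobolev_general (α : ℝ) (hα : 0 < α) (n : ℕ)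
    (x₀ : EuclideanSpace ℝ (Fin n))
    (f : EuclideanSpace ℝ (Fin n) → ℝ)
    (hf : ∀ x, f x = (α / π) ^ ((n : ℝ) / 4) * Real.exp (-(α / 2) * ‖x - x₀‖ ^ 2)) :
    (∫ x : EuclideanSpace ℝ (Fin n), f x ^ 2) = 1 ∧
    (∫ x : EuclideanSpace ℝ (Fin n), f x ^ 2 * Real.log (f x ^ 2)) =
      -(n : ℝ) + ((n : ℝ) / 2) * Real.log (α / π) +
        (1 / α) * ∫ x : EuclideanSpace ℝ (Fin n), ‖gradient f x‖ ^ 2 := by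
  set g : EuclideanSpace ℝ (Fin n) → ℝ := fun x => exp (-α * ‖x - x₀‖ ^ 2)
  set Z : ℝ := (π / α) ^ ((n : ℝ) / 2)
  have hZ : 0 < Z := by positivity
  have hf_sq (x) : f x ^ 2 = Z⁻¹ * g x := by
    rw [hf, sq_rpow_div_four_mul_exp_neg_half_mul hα]
  have hgrad (x) : ‖gradient f x‖ ^ 2 = α ^ 2 * Z⁻¹ * (‖x - x₀‖ ^ 2 * g x) := by
    rw [funext hf, sq_norm_gradient_mul_exp_neg_mul_sq_norm_sub, ← hf, hf_sq]
    ring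
  have hlog (x) : f x ^ 2 * log (f x ^ 2) = Z⁻¹ * (-log Z * g x - α * (‖x - x₀‖ ^ 2 * g x)) := by
    rw [hf_sq, log_mul (inv_ne_zero hZ.ne') (exp_ne_zero _), log_inv, log_exp]
    ring
  have hg_integrable : Integrable g :=
    ((integrable_pow_norm_mul_exp_neg_mul_sq_norm volume hα 0).comp_sub_right x₀).congr
      (by simp [g])
  have hmoment_integrable : Integrable fun x => ‖x - x₀‖ ^ 2 * g x :=
    (integrable_pow_norm_mul_exp_neg_mul_sq_norm volume hα 2).comp_sub_right x₀
  have hg_integral : ∫ x, g x = Z :=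
    (integral_exp_neg_mul_sq_norm_sub hα x₀).trans (by rw [finrank_euclideanSpace_fin])
  have hmoment_integral : ∫ x, ‖x - x₀‖ ^ 2 * g x = n / (2 * α) * Z :=
    (integral_sq_norm_sub_mul_exp_neg_mul_sq_norm_sub hα x₀).trans
      (by rw [finrank_euclideanSpace_fin])
  have hlogZ : log Z = -((n : ℝ) / 2 * log (α / π)) := by
    rw [log_rpow (by positivity), ← inv_div α π, log_inv, mul_neg]
  refine ⟨?_, ?_⟩
  · simp_rw [hf_sq]
    rw [integral_const_mul, hg_integral, inv_mul_cancel₀ hZ.ne']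
  · simp_rw [hlog, hgrad]
    rw [integral_const_mul,
      integral_sub (hg_integrable.const_mul _) (hmoment_integrable.const_mul _),
      integral_const_mul, integral_const_mul, integral_const_mul, hg_integral, hmoment_integral,
      hlogZ]
    field_simp
    ring

theorem gaussian_extremal_logSobolev (α : ℝ) (hα : 0 < α) (n : ℕ) (hn : 1 ≤ n)
    (x₀ : EuclideanSpace ℝ (Fin n))
    (f : EuclideanSpace ℝ (Fin n) → ℝ)
    (hf : ∀ x, f x = (α / π) ^ ((n : ℝ) / 4) * Real.exp (-(α / 2) * ‖x - x₀‖ ^ 2)) :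
    (∫ x : EuclideanSpace ℝ (Fin n), f x ^ 2) = 1 ∧
    (∫ x : EuclideanSpace ℝ (Fin n), f x ^ 2 * Real.log (f x ^ 2)) =
      -(n : ℝ) + ((n : ℝ) / 2) * Real.log (α / π) +
        (1 / α) * ∫ x : EuclideanSpace ℝ (Fin n), ‖gradient f x‖ ^ 2 :=
  gaussian_extremal_logSobolev_general α hα n x₀ f hf
end

section
/- Let μ be a Borel measure on ℝ^N (N ≥ 1) and n ≥ 1, C > 0 be such that μ(B_r) ≤ C r^n for every r ≥ 1, where B_r is the Euclidean ball of radius r centered at the origin. Then for all β ≥ 0, C' ≥ 0 and θ ∈ (0,2), the function x ↦ |x|^β e^{C'|x|^θ - |x|²/4} is μ-integrable on ℝ^N. -/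
open Real MeasureTheory Filter

private lemma aux1 (a b θ : ℝ) (hθ : θ < 2) :
    Tendsto (fun t : ℝ => a * t + b * t ^ θ - t ^ 2 / 4) atTop atBot := by
  have heq : ∀ᶠ t : ℝ in atTop,
      t ^ 2 * (a / t + b * t ^ (θ - 2) - 1 / 4) = a * t + b * t ^ θ - t ^ 2 / 4 := by
    filter_upwards [eventually_gt_atTop 0] with t ht
    have h1 : t ^ (2:ℕ) * t ^ (θ - 2) = t ^ θ := by
      rw [← Real.rpow_natCast t 2, ← Real.rpow_add ht]; norm_num
    rw [mul_sub, mul_add, mul_comm b (t ^ (θ - 2)), ← mul_assoc, h1]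
    field_simp
  have hlim : Tendsto (fun t : ℝ => a / t + b * t ^ (θ - 2) - 1 / 4) atTop
      (nhds (0 + b * 0 - 1 / 4)) := by
    refine Tendsto.sub (Tendsto.add ?_ ?_) tendsto_const_nhds
    · exact tendsto_const_nhds.div_atTop tendsto_id
    · refine Tendsto.const_mul b ?_
      have := tendsto_rpow_neg_atTop (y := 2 - θ) (by linarith)
      convert this using 2
      ring
  have hlim' : Tendsto (fun t : ℝ => a / t + b * t ^ (θ - 2) - 1 / 4) atTop
      (nhds (-(1/4))) := by convert hlim using 2; ring
  have h2 : Tendsto (fun t : ℝ => t ^ 2) atTop atTop := tendsto_pow_atTop two_ne_zero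
  exact (Tendsto.atTop_mul_neg (by norm_num) h2 hlim').congr' heq

private lemma aux2 (n : ℕ) (C β c θ : ℝ) (hβ : 0 ≤ β) (hc : 0 ≤ c) (hθ : 0 < θ)
    (hθ2 : θ < 2) :
    Summable (fun k : ℕ => C * (((k : ℝ) + 1) ^ n *
      (((k : ℝ) + 1) ^ β * Real.exp (c * ((k : ℝ) + 1) ^ θ - (k : ℝ) ^ 2 / 4)))) := by
  apply Summable.mul_left C
  have hgeo : Summable (fun k : ℕ => Real.exp (-(k : ℝ))) := by
    have : (fun k : ℕ => Real.exp (-(k : ℝ))) = fun k : ℕ => Real.exp (-1) ^ k := by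
      funext k
      rw [← Real.exp_nat_mul]
      ring_nf
    rw [this]
    exact summable_geometric_of_lt_one (le_of_lt (Real.exp_pos _))
      (Real.exp_lt_one_iff.mpr (by norm_num))
  apply summable_of_isBigO_nat hgeo
  apply Asymptotics.IsBigO.of_bound 1
  have htend := (aux1 ((n : ℝ) + β + 2) (c * 2 ^ θ) θ hθ2).comp
    tendsto_natCast_atTop_atTop (α := ℕ)
  filter_upwards [eventually_ge_atTop 1, htend.eventually (eventually_le_atBot 0)]
    with k hk1 hk0
  have hk1' : (1 : ℝ) ≤ (k : ℝ) := by exact_mod_cast hk1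
  have hkpos : (0 : ℝ) < (k : ℝ) + 1 := by linarith
  have hterm : ((k : ℝ) + 1) ^ n * (((k : ℝ) + 1) ^ β *
      Real.exp (c * ((k : ℝ) + 1) ^ θ - (k : ℝ) ^ 2 / 4)) =
      Real.exp (((n : ℝ) + β) * Real.log ((k : ℝ) + 1) +
        (c * ((k : ℝ) + 1) ^ θ - (k : ℝ) ^ 2 / 4)) := by
    rw [← Real.rpow_natCast ((k:ℝ)+1) n, Real.rpow_def_of_pos hkpos,
      Real.rpow_def_of_pos hkpos, ← Real.exp_add, ← Real.exp_add]
    congr 1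
    ring
  have hlog : Real.log ((k : ℝ) + 1) ≤ (k : ℝ) := by
    have := Real.log_le_sub_one_of_pos hkpos
    linarith
  have hpow : ((k : ℝ) + 1) ^ θ ≤ 2 ^ θ * (k : ℝ) ^ θ := by
    rw [← Real.mul_rpow (by norm_num) (by linarith)]
    exact Real.rpow_le_rpow (by linarith) (by linarith) (le_of_lt hθ)
  have hexp : ((n : ℝ) + β) * Real.log ((k : ℝ) + 1) +
      (c * ((k : ℝ) + 1) ^ θ - (k : ℝ) ^ 2 / 4) ≤ -(k : ℝ) := by
    have h1 : ((n : ℝ) + β) * Real.log ((k : ℝ) + 1) ≤ ((n : ℝ) + β) * (k : ℝ) :=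
      mul_le_mul_of_nonneg_left hlog (by positivity)
    have h2 : c * ((k : ℝ) + 1) ^ θ ≤ c * 2 ^ θ * (k : ℝ) ^ θ := by
      rw [mul_assoc]
      exact mul_le_mul_of_nonneg_left hpow hc
    have h3 : ((n : ℝ) + β + 2) * (k : ℝ) + c * 2 ^ θ * (k : ℝ) ^ θ -
        (k : ℝ) ^ 2 / 4 ≤ 0 := hk0
    nlinarith
  rw [hterm, Real.norm_eq_abs, Real.norm_eq_abs, Real.abs_exp, Real.abs_exp, one_mul]
  exact Real.exp_le_exp.mpr hexp

theorem integrable_of_volume_growth (N : ℕ) (hN : 1 ≤ N)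
    (μ : Measure (EuclideanSpace ℝ (Fin N))) (n : ℕ) (hn : 1 ≤ n) (C : ℝ) (hC : 0 < C)
    (hμ : ∀ r : ℝ, 1 ≤ r → μ (Metric.closedBall 0 r) ≤ ENNReal.ofReal (C * r ^ n))
    (β C' θ : ℝ) (hβ : 0 ≤ β) (hC' : 0 ≤ C') (hθ : θ ∈ Set.Ioo (0 : ℝ) 2) :
    Integrable (fun x : EuclideanSpace ℝ (Fin N) =>
      ‖x‖ ^ β * Real.exp (C' * ‖x‖ ^ θ - ‖x‖ ^ 2 / 4)) μ := by
  obtain ⟨hθ0, hθ2⟩ := hθ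
  set f : EuclideanSpace ℝ (Fin N) → ℝ :=
    fun x => ‖x‖ ^ β * Real.exp (C' * ‖x‖ ^ θ - ‖x‖ ^ 2 / 4) with hf
  have hfnonneg : ∀ x, 0 ≤ f x := fun x =>
    mul_nonneg (Real.rpow_nonneg (norm_nonneg x) β) (le_of_lt (Real.exp_pos _))
  have hcont : Continuous f := by
    apply Continuous.mul
    · exact continuous_norm.rpow_const (fun x => Or.inr hβ)
    · apply Real.continuous_exp.comp
      apply Continuous.sub
      · exact continuous_const.mul (continuous_norm.rpow_const (fun x => Or.inr hθ0.le))
      · exact (continuous_norm.pow 2).div_const 4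
  refine ⟨hcont.aestronglyMeasurable, ?_⟩
  rw [hasFiniteIntegral_iff_ofReal (Filter.Eventually.of_forall hfnonneg)]
  -- annuli
  set A : ℕ → Set (EuclideanSpace ℝ (Fin N)) :=
    fun k => Metric.closedBall 0 ((k : ℝ) + 1) \ Metric.ball 0 (k : ℝ) with hA
  have hcover : (Set.univ : Set (EuclideanSpace ℝ (Fin N))) ⊆ ⋃ k, A k := by
    intro x _
    refine Set.mem_iUnion.mpr ⟨⌊‖x‖⌋₊, ?_, ?_⟩
    · rw [Metric.mem_closedBall, dist_zero_right]
      exact le_of_lt (Nat.lt_floor_add_one ‖x‖)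
    · rw [Metric.mem_ball, dist_zero_right]
      exact not_lt.mpr (Nat.floor_le (norm_nonneg x))
  set M : ℕ → ℝ := fun k =>
    ((k : ℝ) + 1) ^ β * Real.exp (C' * ((k : ℝ) + 1) ^ θ - (k : ℝ) ^ 2 / 4) with hM
  have hMnonneg : ∀ k, 0 ≤ M k := fun k =>
    mul_nonneg (Real.rpow_nonneg (by positivity) β) (le_of_lt (Real.exp_pos _))
  have hbound : ∀ k : ℕ, ∀ x ∈ A k, f x ≤ M k := by
    intro k x hx
    obtain ⟨hx1, hx2⟩ := hx
    rw [Metric.mem_closedBall, dist_zero_right] at hx1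
    rw [Metric.mem_ball, dist_zero_right, not_lt] at hx2
    apply mul_le_mul
    · exact Real.rpow_le_rpow (norm_nonneg x) hx1 hβ
    · apply Real.exp_le_exp.mpr
      apply sub_le_sub
      · exact mul_le_mul_of_nonneg_left
          (Real.rpow_le_rpow (norm_nonneg x) hx1 hθ0.le) hC'
      · apply div_le_div_of_nonneg_right _ (by norm_num)
        exact pow_le_pow_left₀ (Nat.cast_nonneg k) hx2 2
    · exact le_of_lt (Real.exp_pos _)
    · exact Real.rpow_nonneg (by positivity) β
  calc ∫⁻ x, ENNReal.ofReal (f x) ∂μ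
      ≤ ∫⁻ x in ⋃ k, A k, ENNReal.ofReal (f x) ∂μ := by
        rw [← setLIntegral_univ]
        exact lintegral_mono_set hcover
    _ ≤ ∑' k, ∫⁻ x in A k, ENNReal.ofReal (f x) ∂μ := lintegral_iUnion_le _ _
    _ ≤ ∑' k : ℕ, ENNReal.ofReal (C * ((k : ℝ) + 1) ^ n * M k) := by
        apply ENNReal.tsum_le_tsum
        intro k
        calc ∫⁻ x in A k, ENNReal.ofReal (f x) ∂μ
            ≤ ∫⁻ _ in A k, ENNReal.ofReal (M k) ∂μ := by
              apply setLIntegral_mono measurable_const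
              intro x hx
              exact ENNReal.ofReal_le_ofReal (hbound k x hx)
          _ = ENNReal.ofReal (M k) * μ (A k) := setLIntegral_const _ _
          _ ≤ ENNReal.ofReal (M k) * ENNReal.ofReal (C * ((k : ℝ) + 1) ^ n) := by
              apply mul_le_mul_right
              calc μ (A k) ≤ μ (Metric.closedBall 0 ((k : ℝ) + 1)) :=
                    measure_mono Set.diff_subset
                _ ≤ ENNReal.ofReal (C * ((k : ℝ) + 1) ^ n) :=
                    hμ _ (by have : (0:ℝ) ≤ (k:ℝ) := Nat.cast_nonneg k; linarith)
          _ = ENNReal.ofReal (C * ((k : ℝ) + 1) ^ n * M k) := by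
              rw [← ENNReal.ofReal_mul (hMnonneg k), mul_comm]
    _ < ⊤ := by
        have hsum := aux2 n C β C' θ hβ hC' hθ0 hθ2
        have heq : ∀ k : ℕ, C * ((k : ℝ) + 1) ^ n * M k =
            C * (((k : ℝ) + 1) ^ n * (((k : ℝ) + 1) ^ β *
              Real.exp (C' * ((k : ℝ) + 1) ^ θ - (k : ℝ) ^ 2 / 4))) := by
          intro k; simp only [hM]; ring
        have hnn : ∀ k : ℕ, 0 ≤ C * ((k : ℝ) + 1) ^ n * M k := fun k =>
          mul_nonneg (mul_nonneg hC.le (by positivity)) (hMnonneg k)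
        have hsum' : Summable (fun k : ℕ => C * ((k : ℝ) + 1) ^ n * M k) :=
          hsum.congr fun k => (heq k).symm
        rw [← ENNReal.ofReal_tsum_of_nonneg hnn hsum']
        exact ENNReal.ofReal_lt_top
end
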